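/- Let M, N be m×m complex matrices with i(M − M*) ⪰ 0 and i(N − N*) ⪰ 0, and suppose I − NM and I − MN are invertible. Then the 2m×2m block matrix T = [[M(I − NM)⁻¹, M(I − NM)⁻¹N], [N(I − MN)⁻¹M, N(I − MN)⁻¹]] satisfies i(T − T*) ⪰ 0. -/

import Mathlib

open Matrix
open scoped ComplexOrder

/-!
With `D = diag(M, N)` and `J` the block swap, `T` is the closed-loop map `w ↦ y` of the loop
`u = w + J y`, `y = D u`, that is `(1 - D J) T = D`. Hence `T = D E` with `E = 1 + J T` the map
`w ↦ u`, and since `J` is self-adjoint, `T - T* = E* (D - D*) E`: a congruence of the positive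
semidefinite block diagonal matrix `i (D - D*) = diag(i (M - M*), i (N - N*))`.
-/

theorem Ring.inverse_one_sub_mul_mul_comm {R : Type*} [Ring R] {a b : R}
    (hab : IsUnit (1 - a * b)) (hba : IsUnit (1 - b * a)) :
    Ring.inverse (1 - a * b) * a = a * Ring.inverse (1 - b * a) := by
  have hcomm : a * (1 - b * a) = (1 - a * b) * a := by noncomm_ring
  calc Ring.inverse (1 - a * b) * a
      = Ring.inverse (1 - a * b) * ((1 - a * b) * (a * Ring.inverse (1 - b * a))) := by
        rw [← mul_assoc (1 - a * b), ← hcomm, Ring.mul_inverse_cancel_right _ _ hba]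
    _ = a * Ring.inverse (1 - b * a) := Ring.inverse_mul_cancel_left _ _ hab

theorem sub_star_eq_star_mul_sub_star_mul {R : Type*} [Ring R] [StarRing R] {T D J : R}
    (hJ : IsSelfAdjoint J) (hT : (1 - D * J) * T = D) :
    T - star T = star (1 + J * T) * (D - star D) * (1 + J * T) := by
  have hDE : D * (1 + J * T) = T := by
    calc D * (1 + J * T) = (1 - D * J) * T + D * J * T := by rw [hT]; noncomm_ring
      _ = T := by noncomm_ring
  have hstar : star (1 + J * T) = 1 + star T * J := by
    rw [star_add, star_one, star_mul, hJ.star_eq]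
  calc T - star T = (1 + star T * J) * T - star T * (1 + J * T) := by noncomm_ring
    _ = star (1 + J * T) * (D - star D) * (1 + J * T) := by
      rw [mul_sub, sub_mul, mul_assoc, hDE, ← star_mul, hDE, hstar]

theorem Matrix.one_sub_mul_swap_mul_closedLoop {n α : Type*} [Fintype n] [DecidableEq n]
    [CommRing α] {M N : Matrix n n α} (hNM : IsUnit (1 - N * M)) (hMN : IsUnit (1 - M * N)) :
    (1 - fromBlocks M 0 0 N * fromBlocks 0 1 1 0) *
        fromBlocks (M * (1 - N * M)⁻¹) (M * (1 - N * M)⁻¹ * N)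
          (N * (1 - M * N)⁻¹ * M) (N * (1 - M * N)⁻¹) =
      fromBlocks M 0 0 N := by
  rw [← fromBlocks_one, fromBlocks_multiply, sub_eq_add_neg, fromBlocks_neg, fromBlocks_add,
    fromBlocks_multiply]
  simp only [nonsing_inv_eq_ringInverse, fromBlocks_inj, mul_zero, mul_one, one_mul, add_zero,
    zero_add, neg_zero, mul_assoc _ _ N, mul_assoc _ _ M,
    Ring.inverse_one_sub_mul_mul_comm hNM hMN, Ring.inverse_one_sub_mul_mul_comm hMN hNM]
  refine ⟨?_, by noncomm_ring, by noncomm_ring, ?_⟩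
  · calc _ = M * ((1 - N * M) * Ring.inverse (1 - N * M)) := by noncomm_ring
      _ = M := by rw [Ring.mul_inverse_cancel _ hNM, mul_one]
  · calc _ = N * ((1 - M * N) * Ring.inverse (1 - M * N)) := by noncomm_ring
      _ = N := by rw [Ring.mul_inverse_cancel _ hMN, mul_one]

theorem Matrix.PosSemidef.fromBlocks_diag {m n R : Type*} [Fintype m] [Fintype n]
    [Ring R] [PartialOrder R] [StarRing R] [IsOrderedAddMonoid R]
    {A : Matrix m m R} {B : Matrix n n R} (hA : A.PosSemidef) (hB : B.PosSemidef) :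
    (fromBlocks A 0 0 B).PosSemidef := by
  refine .of_dotProduct_mulVec_nonneg (hA.1.fromBlocks (by simp) hB.1) fun x => ?_
  rw [← Sum.elim_comp_inl_inr x, fromBlocks_mulVec, Function.star_sumElim]
  simp only [zero_mulVec, add_zero, zero_add, sumElim_dotProduct_sumElim]
  exact add_nonneg (hA.dotProduct_mulVec_nonneg _) (hB.dotProduct_mulVec_nonneg _)

theorem stmt_4 (m : ℕ) (M N : Matrix (Fin m) (Fin m) ℂ)
    (hM : (Complex.I • (M - Mᴴ)).PosSemidef)
    (hN : (Complex.I • (N - Nᴴ)).PosSemidef)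
    (h1 : IsUnit (1 - N * M)) (h2 : IsUnit (1 - M * N)) :
    letI T : Matrix (Fin m ⊕ Fin m) (Fin m ⊕ Fin m) ℂ :=
      Matrix.fromBlocks (M * (1 - N * M)⁻¹) (M * (1 - N * M)⁻¹ * N)
        (N * (1 - M * N)⁻¹ * M) (N * (1 - M * N)⁻¹)
    (Complex.I • (T - Tᴴ)).PosSemidef := by
  have hJ : IsSelfAdjoint (fromBlocks 0 1 1 0 : Matrix (Fin m ⊕ Fin m) (Fin m ⊕ Fin m) ℂ) := by
    simp [IsSelfAdjoint, star_eq_conjTranspose, fromBlocks_conjTranspose]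
  have hT := sub_star_eq_star_mul_sub_star_mul hJ (one_sub_mul_swap_mul_closedLoop h1 h2)
  have hD : Complex.I • (fromBlocks M 0 0 N - (fromBlocks M 0 0 N)ᴴ)
      = fromBlocks (Complex.I • (M - Mᴴ)) 0 0 (Complex.I • (N - Nᴴ)) := by
    rw [fromBlocks_conjTranspose, sub_eq_add_neg, fromBlocks_neg, fromBlocks_add, fromBlocks_smul]
    simp [sub_eq_add_neg]
  simp only [star_eq_conjTranspose] at hT
  rw [hT, ← Matrix.smul_mul, ← Matrix.mul_smul, hD]
  exact (hM.fromBlocks_diag hN).conjTranspose_mul_mul_same _
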